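/- Under the same hypotheses as the general cross approximation error bound, the index sets I, J of cardinality m produced by cross approximation with complete pivoting satisfy ‖A − A(:,J)A(I,J)^{-1}A(I,:)‖_max ≤ 2^{2m+1} · ρ_m · γ_m(A), where γ_m(A) = min{‖E‖_max : rank(A+E) ≤ m}. -/

import Mathlib

/-- The singular values of a real matrix: square roots of the eigenvalues of `AᴴA`. -/
noncomputable def svals {n m : ℕ} (A : Matrix (Fin n) (Fin m) ℝ) : Fin m → ℝ :=
  fun i => Real.sqrt ((Matrix.isHermitian_conjTranspose_mul_self A).eigenvalues i)

/-- `sigma A k` is the `k`-th largest singular value of `A` (1-indexed). -/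
noncomputable def sigma {n : ℕ} (A : Matrix (Fin n) (Fin n) ℝ) (k : ℕ) : ℝ :=
  (Multiset.sort (Multiset.map (svals A) Finset.univ.val) (· ≤ ·)).getD (n - k) 0

/-- The entrywise maximum norm of a matrix. -/
noncomputable def maxNorm {n m : ℕ} (E : Matrix (Fin n) (Fin m) ℝ) : ℝ :=
  ⨆ i, ⨆ j, |E i j|

/-- `CrossApproxSeq A m R i j` records a run of `m` steps of cross approximation
with complete pivoting on `A`: `R 0 = A`, and at each step `k < m` the pivot
`(i k, j k)` is a nonzero entry of maximal absolute value of the residual `R k`,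
which is then updated by subtracting the corresponding rank-one cross. -/
def CrossApproxSeq {n : ℕ} (A : Matrix (Fin n) (Fin n) ℝ) (m : ℕ)
    (R : ℕ → Matrix (Fin n) (Fin n) ℝ) (i j : ℕ → Fin n) : Prop :=
  R 0 = A ∧ ∀ k < m,
    R k (i k) (j k) ≠ 0 ∧
    (∀ a b : Fin n, |R k a b| ≤ |R k (i k) (j k)|) ∧
    R (k + 1) =
      R k - (R k (i k) (j k))⁻¹ • Matrix.of (fun a b => R k a (j k) * R k (i k) b)

/-- The worst-case growth factor `ρ_m` of complete pivoting: the supremum over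
all matrices of rank at least `m` of `‖A^{(m)}‖_max / ‖A‖_max`, where `A^{(m)}`
is the residual (Schur complement) after `m` steps of complete pivoting. -/
noncomputable def growthFactor (m : ℕ) : ℝ :=
  sSup {r | ∃ (n : ℕ) (A : Matrix (Fin n) (Fin n) ℝ)
      (R : ℕ → Matrix (Fin n) (Fin n) ℝ) (i j : ℕ → Fin n),
      m ≤ A.rank ∧ CrossApproxSeq A m R i j ∧ r = maxNorm (R m) / maxNorm A}

/-- The approximation numbers: `γ_k(A) = min {‖E‖_max : rank (A + E) ≤ k}`. -/
noncomputable def gammaAp {n : ℕ} (A : Matrix (Fin n) (Fin n) ℝ) (k : ℕ) : ℝ :=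
  sInf {c | ∃ E : Matrix (Fin n) (Fin n) ℝ, (A + E).rank ≤ k ∧ c = maxNorm E}

/-!
Cross approximation with complete pivoting is Gaussian elimination: the cross approximation
error is the residual `R m`, and the `k`-th pivot has modulus `maxNorm (R k)`. Prepending a
block `μ • 1` with `μ = maxNorm (R t)` turns the remaining steps from `R t` into an `m`-step run,
so `maxNorm (R m) ≤ ρ_m · maxNorm (R t)`. Hence all pivots, together with an entry of `R m` of
maximal modulus taken as an `(m+1)`-st pivot, are at least `maxNorm (R m) / ρ_m`.

If `rank (A + E) ≤ m`, the `(m+1) × (m+1)` pivot submatrix of `A + E` has a kernel vector `x`,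
on which `A` acts like `-E`. Eliminating along the pivots at most doubles this action at each
step (forward substitution), and back substitution along the triangular pivot rows gives
`‖x‖₁ ≤ 2^m (2^(m+1) - 1) ‖E‖_max ‖x‖₁ / min |pivot|`, i.e. `min |pivot| ≤ 2^(2m+1) ‖E‖_max`.
-/
open Finset

section MaxNorm

variable {n m : ℕ} (E : Matrix (Fin n) (Fin m) ℝ)

lemma maxNorm_nonneg : 0 ≤ maxNorm E :=
  Real.iSup_nonneg fun _ => Real.iSup_nonneg fun _ => abs_nonneg _

lemma abs_le_maxNorm (a : Fin n) (b : Fin m) : |E a b| ≤ maxNorm E :=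
  (le_ciSup (Set.finite_range _).bddAbove b).trans
    (le_ciSup (f := fun a => ⨆ b, |E a b|) (Set.finite_range _).bddAbove a)

lemma maxNorm_le {c : ℝ} (hc : 0 ≤ c) (h : ∀ a b, |E a b| ≤ c) : maxNorm E ≤ c :=
  Real.iSup_le (fun a => Real.iSup_le (h a) hc) hc

lemma exists_abs_eq_maxNorm (hE : maxNorm E ≠ 0) : ∃ a b, |E a b| = maxNorm E := by
  cases isEmpty_or_nonempty (Fin n × Fin m) with
  | inl _ =>
    exact absurd ((maxNorm_le E le_rfl fun a b => isEmptyElim (a, b)).antisymm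
      (maxNorm_nonneg E)) hE
  | inr _ =>
    obtain ⟨⟨a, b⟩, hmax⟩ := Finite.exists_max fun p : Fin n × Fin m => |E p.1 p.2|
    exact ⟨a, b, (abs_le_maxNorm E a b).antisymm
      (maxNorm_le E (abs_nonneg _) fun a' b' => hmax (a', b'))⟩

end MaxNorm

lemma abs_sum_mul_le_maxNorm_mul_of_sum_add_mul_eq_zero {n m : ℕ}
    {A E : Matrix (Fin n) (Fin m) ℝ} {a : Fin n} {g : ℕ → Fin m} {x : ℕ → ℝ} {T : Finset ℕ}
    (h : ∑ t ∈ T, (A + E) a (g t) * x t = 0) :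
    |∑ t ∈ T, A a (g t) * x t| ≤ maxNorm E * ∑ t ∈ T, |x t| := by
  have hAE : ∑ t ∈ T, A a (g t) * x t = -∑ t ∈ T, E a (g t) * x t := by
    rw [eq_neg_iff_add_eq_zero, ← sum_add_distrib, ← h]
    simp [add_mul]
  rw [hAE, abs_neg, mul_sum]
  refine (abs_sum_le_sum_abs _ _).trans (sum_le_sum fun t _ => ?_)
  rw [abs_mul]
  exact mul_le_mul_of_nonneg_right (abs_le_maxNorm E _ _) (abs_nonneg _)

lemma le_gammaAp {n k : ℕ} {A : Matrix (Fin n) (Fin n) ℝ} {c : ℝ}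
    (h : ∀ E, (A + E).rank ≤ k → c ≤ maxNorm E) : c ≤ gammaAp A k :=
  le_csInf ⟨_, -A, by simp, rfl⟩ (by rintro _ ⟨E, hE, rfl⟩; exact h E hE)

lemma gammaAp_nonneg {n : ℕ} (A : Matrix (Fin n) (Fin n) ℝ) (k : ℕ) : 0 ≤ gammaAp A k :=
  le_gammaAp fun E _ => maxNorm_nonneg E

lemma growthFactor_nonneg (m : ℕ) : 0 ≤ growthFactor m :=
  Real.sSup_nonneg <| by
    rintro _ ⟨_, A, R, -, -, -, -, rfl⟩
    exact div_nonneg (maxNorm_nonneg _) (maxNorm_nonneg A)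

section CrossFactorization

variable {ι κ l α : Type*} [Fintype l] [CommRing α] {A S : Matrix ι κ α}
  {V : Matrix ι l α} {U : Matrix l κ α} {f : l → ι} {g : l → κ}

lemma submatrix_eq_mul_of_eq_mul_add (hA : A = V * U + S) (hS : ∀ s b, S (f s) b = 0) :
    A.submatrix f g = V.submatrix f id * U.submatrix id g := by
  ext s t
  simp [hA, hS, Matrix.mul_apply]

lemma submatrix_mul_inv_mul_submatrix_of_eq_mul_add [DecidableEq l] (hA : A = V * U + S)
    (hrow : ∀ s b, S (f s) b = 0) (hcol : ∀ a t, S a (g t) = 0)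
    (hV : IsUnit (V.submatrix f id).det) (hU : IsUnit (U.submatrix id g).det) :
    A.submatrix id g * (A.submatrix f g)⁻¹ * A.submatrix f id = V * U := by
  have hAg : A.submatrix id g = V * U.submatrix id g := by
    ext a t
    simp [hA, hcol, Matrix.mul_apply]
  have hAf : A.submatrix f id = V.submatrix f id * U := by
    ext s b
    simp [hA, hrow, Matrix.mul_apply]
  rw [hAg, hAf, submatrix_eq_mul_of_eq_mul_add hA hrow, Matrix.mul_inv_rev]
  simp only [Matrix.mul_assoc]
  rw [Matrix.nonsing_inv_mul_cancel_left _ _ hV, Matrix.mul_nonsing_inv_cancel_left _ _ hU]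

end CrossFactorization

lemma exists_sum_mul_eq_zero_of_rank_le {ι κ : Type*} [Fintype κ] (B : Matrix ι κ ℝ) {m : ℕ}
    (hB : B.rank ≤ m) (f : ℕ → ι) (g : ℕ → κ) :
    ∃ x : ℕ → ℝ, 0 < ∑ t ∈ range (m + 1), |x t| ∧
      ∀ s < m + 1, ∑ t ∈ range (m + 1), B (f s) (g t) * x t = 0 := by
  set M := B.submatrix (fun s : Fin (m + 1) => f s) (fun t : Fin (m + 1) => g t)
  have hdet : M.det = 0 := by
    by_contra hM
    have := Matrix.rank_submatrix_le B (fun s : Fin (m + 1) => f s) (fun t : Fin (m + 1) => g t)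
    rw [Matrix.rank_of_isUnit _ ((Matrix.isUnit_iff_isUnit_det _).2 (isUnit_iff_ne_zero.2 hM)),
      Fintype.card_fin] at this
    omega
  obtain ⟨v, hv, hMv⟩ := Matrix.exists_mulVec_eq_zero_iff.2 hdet
  set x : ℕ → ℝ := fun t => if ht : t < m + 1 then v ⟨t, ht⟩ else 0
  have hx : ∀ t : Fin (m + 1), x t = v t := fun t => by simp only [x, dif_pos t.isLt]
  obtain ⟨t, ht⟩ := Function.ne_iff.1 hv
  refine ⟨x, sum_pos' (fun _ _ => abs_nonneg _) ⟨t, mem_range.2 t.2, by simpa [hx] using ht⟩,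
    fun s hs => ?_⟩
  rw [← Fin.sum_univ_eq_sum_range (fun t => B (f s) (g t) * x t)]
  simpa [hx, M, Matrix.mulVec, dotProduct] using congrFun hMv ⟨s, hs⟩

lemma sum_Ico_le_sum_Ico_two_pow_mul {N : ℕ} {a b : ℕ → ℝ}
    (h : ∀ k < N, a k ≤ b k + ∑ t ∈ Ico (k + 1) N, a t) {k : ℕ} (hk : k ≤ N) :
    ∑ t ∈ Ico k N, a t ≤ ∑ t ∈ Ico k N, 2 ^ (t - k) * b t := by
  induction hk using Nat.decreasingInduction with
  | self => simp
  | of_succ k hk ih =>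
    have hpow : ∀ t ∈ Ico (k + 1) N, (2 : ℝ) ^ (t - k) * b t = 2 * (2 ^ (t - (k + 1)) * b t) :=
      fun t ht => by
        rw [← mul_assoc, ← pow_succ']
        congr 2
        have := (mem_Ico.1 ht).1
        omega
    rw [sum_eq_sum_Ico_succ_bot hk, sum_eq_sum_Ico_succ_bot hk, sum_congr rfl hpow, ← mul_sum,
      Nat.sub_self, pow_zero, one_mul]
    linarith [h k hk]

noncomputable def crossColFactor {n : ℕ} (R : ℕ → Matrix (Fin n) (Fin n) ℝ) (i j : ℕ → Fin n)
    (m : ℕ) :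
    Matrix (Fin n) (Fin m) ℝ :=
  Matrix.of fun a t => (R t (i t) (j t))⁻¹ * R t a (j t)

def crossRowFactor {n : ℕ} (R : ℕ → Matrix (Fin n) (Fin n) ℝ) (i : ℕ → Fin n) (m : ℕ) :
    Matrix (Fin m) (Fin n) ℝ :=
  Matrix.of fun t b => R t (i t) b

def padMatrix {n : ℕ} (c : ℝ) (B : Matrix (Fin n) (Fin n) ℝ) :
    Matrix (Fin (n + 1)) (Fin (n + 1)) ℝ :=
  Matrix.of (Matrix.vecCons (Matrix.vecCons c 0) fun a => Matrix.vecCons 0 (B a))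

lemma maxNorm_padMatrix {n : ℕ} (c : ℝ) (B : Matrix (Fin n) (Fin n) ℝ) :
    maxNorm (padMatrix c B) = max |c| (maxNorm B) := by
  refine le_antisymm (maxNorm_le _ (le_max_of_le_left (abs_nonneg c)) fun a b => ?_)
    (max_le ?_ (maxNorm_le _ (maxNorm_nonneg _) fun a b => ?_))
  · refine Fin.cases ?_ (fun a => ?_) a <;> refine Fin.cases ?_ (fun b => ?_) b <;>
      simp [padMatrix, abs_le_maxNorm, maxNorm_nonneg]
  · simpa [padMatrix] using abs_le_maxNorm (padMatrix c B) 0 0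
  · simpa [padMatrix] using abs_le_maxNorm (padMatrix c B) a.succ b.succ

namespace CrossApproxSeq

variable {n m : ℕ} {A : Matrix (Fin n) (Fin n) ℝ} {R : ℕ → Matrix (Fin n) (Fin n) ℝ}
  {i j : ℕ → Fin n}

lemma pivot_ne_zero (h : CrossApproxSeq A m R i j) {k : ℕ} (hk : k < m) :
    R k (i k) (j k) ≠ 0 :=
  (h.2 k hk).1

lemma abs_le_abs_pivot (h : CrossApproxSeq A m R i j) {k : ℕ} (hk : k < m) (a b : Fin n) :
    |R k a b| ≤ |R k (i k) (j k)| :=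
  (h.2 k hk).2.1 a b

lemma succ_apply (h : CrossApproxSeq A m R i j) {k : ℕ} (hk : k < m) (a b : Fin n) :
    R (k + 1) a b = R k a b - (R k (i k) (j k))⁻¹ * R k a (j k) * R k (i k) b := by
  rw [(h.2 k hk).2.2, Matrix.sub_apply, Matrix.smul_apply, Matrix.of_apply, smul_eq_mul,
    mul_assoc]

lemma abs_inv_pivot_mul_le_one (h : CrossApproxSeq A m R i j) {k : ℕ} (hk : k < m)
    (a : Fin n) : |(R k (i k) (j k))⁻¹ * R k a (j k)| ≤ 1 := by
  rw [abs_mul, abs_inv]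
  exact inv_mul_le_one_of_le₀ (h.abs_le_abs_pivot hk a (j k)) (abs_nonneg _)

lemma maxNorm_eq_abs_pivot (h : CrossApproxSeq A m R i j) {k : ℕ} (hk : k < m) :
    maxNorm (R k) = |R k (i k) (j k)| :=
  (maxNorm_le _ (abs_nonneg _) (h.abs_le_abs_pivot hk)).antisymm (abs_le_maxNorm _ _ _)

lemma mono (h : CrossApproxSeq A m R i j) {m' : ℕ} (hm : m' ≤ m) :
    CrossApproxSeq A m' R i j :=
  ⟨h.1, fun k hk => h.2 k (hk.trans_le hm)⟩

lemma shift (h : CrossApproxSeq A m R i j) (t : ℕ) :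
    CrossApproxSeq (R t) (m - t) (fun k => R (t + k)) (fun k => i (t + k))
      (fun k => j (t + k)) :=
  ⟨rfl, fun k hk => h.2 (t + k) (by omega)⟩

lemma exists_extend (h : CrossApproxSeq A m R i j) (hR : maxNorm (R m) ≠ 0) :
    ∃ (R' : ℕ → Matrix (Fin n) (Fin n) ℝ) (i' j' : ℕ → Fin n),
      CrossApproxSeq A (m + 1) R' i' j' ∧ R' m = R m := by
  obtain ⟨a, b, hab⟩ := exists_abs_eq_maxNorm (R m) hR
  refine ⟨Function.update R (m + 1)
      (R m - (R m a b)⁻¹ • Matrix.of fun a' b' => R m a' b * R m a b'),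
    Function.update i m a, Function.update j m b, ⟨by simp [h.1], fun k hk => ?_⟩, by simp⟩
  rcases Nat.lt_succ_iff_lt_or_eq.1 hk with hk | rfl
  · rw [Function.update_of_ne (by omega : k ≠ m + 1),
      Function.update_of_ne (by omega : k + 1 ≠ m + 1), Function.update_of_ne hk.ne,
      Function.update_of_ne hk.ne]
    exact h.2 k hk
  · rw [Function.update_of_ne (Nat.succ_ne_self k).symm, Function.update_self,
      Function.update_self, Function.update_self]
    exact ⟨fun h0 => hR (by rw [← hab, h0, abs_zero]),
      fun a' b' => hab ▸ abs_le_maxNorm (R k) a' b', rfl⟩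

lemma apply_row_eq_zero (h : CrossApproxSeq A m R i j) {t k : ℕ} (htk : t < k) (hk : k ≤ m) :
    ∀ b, R k (i t) b = 0 := by
  induction k, htk using Nat.le_induction with
  | base =>
    intro b
    rw [h.succ_apply hk, inv_mul_cancel₀ (h.pivot_ne_zero hk), one_mul, sub_self]
  | succ k htk ih =>
    intro b
    rw [h.succ_apply hk, ih (by omega), ih (by omega)]
    ring

lemma apply_col_eq_zero (h : CrossApproxSeq A m R i j) {t k : ℕ} (htk : t < k) (hk : k ≤ m) :
    ∀ a, R k a (j t) = 0 := by
  induction k, htk using Nat.le_induction with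
  | base =>
    intro a
    rw [h.succ_apply hk, mul_assoc, mul_comm (R t a (j t)), ← mul_assoc,
      inv_mul_cancel₀ (h.pivot_ne_zero hk), one_mul, sub_self]
  | succ k htk ih =>
    intro a
    rw [h.succ_apply hk, ih (by omega), ih (by omega)]
    ring

lemma apply_eq_sum_add (h : CrossApproxSeq A m R i j) {k : ℕ} (hk : k ≤ m) (a b : Fin n) :
    A a b = ∑ t ∈ range k, (R t (i t) (j t))⁻¹ * R t a (j t) * R t (i t) b + R k a b := by
  induction k with
  | zero => simp [h.1]
  | succ k ih => rw [sum_range_succ, h.succ_apply hk, ih (by omega)]; ring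

lemma eq_crossColFactor_mul_crossRowFactor_add (h : CrossApproxSeq A m R i j) :
    A = crossColFactor R i j m * crossRowFactor R i m + R m := by
  ext a b
  rw [h.apply_eq_sum_add le_rfl a b, Matrix.add_apply, Matrix.mul_apply,
    ← Fin.sum_univ_eq_sum_range]
  rfl

lemma det_crossColFactor_submatrix (h : CrossApproxSeq A m R i j) :
    ((crossColFactor R i j m).submatrix (fun t : Fin m => i t.1) id).det = 1 := by
  rw [Matrix.det_of_isLowerTriangular _ fun s t (hst : s < t) =>
    by simp [crossColFactor, h.apply_row_eq_zero hst t.2.le]]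
  exact prod_eq_one fun t _ => by simp [crossColFactor, h.pivot_ne_zero t.2]

lemma isUnit_det_crossRowFactor_submatrix (h : CrossApproxSeq A m R i j) :
    IsUnit ((crossRowFactor R i m).submatrix id (fun t : Fin m => j t.1)).det := by
  rw [Matrix.det_of_isUpperTriangular fun t s (hst : s < t) =>
    by simp [crossRowFactor, h.apply_col_eq_zero hst t.2.le]]
  exact isUnit_iff_ne_zero.2 (prod_ne_zero_iff.2 fun t _ => by
    simpa [crossRowFactor] using h.pivot_ne_zero t.2)

lemma cross_eq (h : CrossApproxSeq A m R i j) :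
    A.submatrix id (fun t : Fin m => j t.1) *
        (A.submatrix (fun t : Fin m => i t.1) (fun t : Fin m => j t.1))⁻¹ *
        A.submatrix (fun t : Fin m => i t.1) id = A - R m := by
  rw [submatrix_mul_inv_mul_submatrix_of_eq_mul_add h.eq_crossColFactor_mul_crossRowFactor_add
    (fun s _ => h.apply_row_eq_zero s.2 le_rfl _) (fun _ t => h.apply_col_eq_zero t.2 le_rfl _)
    (by rw [h.det_crossColFactor_submatrix]; exact isUnit_one)
    h.isUnit_det_crossRowFactor_submatrix]
  exact eq_sub_of_add_eq h.eq_crossColFactor_mul_crossRowFactor_add.symm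

lemma le_rank (h : CrossApproxSeq A m R i j) : m ≤ A.rank := by
  have hpiv := submatrix_eq_mul_of_eq_mul_add (g := fun t : Fin m => j t.1)
    h.eq_crossColFactor_mul_crossRowFactor_add fun s _ => h.apply_row_eq_zero s.2 le_rfl _
  have hunit : IsUnit (A.submatrix (fun t : Fin m => i t.1) (fun t : Fin m => j t.1)) := by
    rw [Matrix.isUnit_iff_isUnit_det, hpiv, Matrix.det_mul, h.det_crossColFactor_submatrix,
      one_mul]
    exact h.isUnit_det_crossRowFactor_submatrix
  simpa [Matrix.rank_of_isUnit _ hunit] using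
    Matrix.rank_submatrix_le A (fun t : Fin m => i t.1) (fun t : Fin m => j t.1)

lemma maxNorm_succ_le (h : CrossApproxSeq A m R i j) {k : ℕ} (hk : k < m) :
    maxNorm (R (k + 1)) ≤ 2 * maxNorm (R k) := by
  refine maxNorm_le _ (by linarith [maxNorm_nonneg (R k)]) fun a b => ?_
  rw [h.succ_apply hk]
  calc |R k a b - (R k (i k) (j k))⁻¹ * R k a (j k) * R k (i k) b|
      ≤ |R k a b| + |(R k (i k) (j k))⁻¹ * R k a (j k)| * |R k (i k) b| := by
        rw [← abs_mul]; exact abs_sub _ _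
    _ ≤ maxNorm (R k) + 1 * maxNorm (R k) := by
        gcongr
        · exact abs_le_maxNorm _ _ _
        · exact h.abs_inv_pivot_mul_le_one hk a
        · exact abs_le_maxNorm _ _ _
    _ = 2 * maxNorm (R k) := by ring

lemma maxNorm_le_two_pow_mul (h : CrossApproxSeq A m R i j) {k : ℕ} (hk : k ≤ m) :
    maxNorm (R k) ≤ 2 ^ k * maxNorm A := by
  induction k with
  | zero => simp [h.1]
  | succ k ih =>
    calc maxNorm (R (k + 1)) ≤ 2 * maxNorm (R k) := h.maxNorm_succ_le hk
      _ ≤ 2 * (2 ^ k * maxNorm A) := by gcongr; exact ih (by omega)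
      _ = 2 ^ (k + 1) * maxNorm A := by ring

lemma div_le_growthFactor (h : CrossApproxSeq A m R i j) :
    maxNorm (R m) / maxNorm A ≤ growthFactor m := by
  refine le_csSup ⟨2 ^ m, ?_⟩ ⟨n, A, R, i, j, h.le_rank, h, rfl⟩
  rintro _ ⟨_, A', R', i', j', -, h', rfl⟩
  exact div_le_of_le_mul₀ (maxNorm_nonneg A') (by positivity) (h'.maxNorm_le_two_pow_mul le_rfl)

lemma pad (h : CrossApproxSeq A m R i j) {μ : ℝ} (hμ : 0 < μ) (hA : maxNorm A ≤ μ) :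
    CrossApproxSeq (padMatrix μ A) (m + 1)
      (fun | 0 => padMatrix μ A | s + 1 => padMatrix 0 (R s))
      (fun | 0 => 0 | s + 1 => (i s).succ) (fun | 0 => 0 | s + 1 => (j s).succ) := by
  refine ⟨rfl, fun s hs => ?_⟩
  cases s with
  | zero =>
    refine ⟨by simpa [padMatrix] using hμ.ne', fun a b => ?_, ?_⟩
    · refine Fin.cases ?_ (fun a => ?_) a <;> refine Fin.cases ?_ (fun b => ?_) b <;>
        simp [padMatrix, abs_of_pos hμ, hμ.le, (abs_le_maxNorm A _ _).trans hA]
    · ext a b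
      refine Fin.cases ?_ (fun a => ?_) a <;> refine Fin.cases ?_ (fun b => ?_) b <;>
        simp [padMatrix, h.1, hμ.ne']
  | succ s =>
    have hs : s < m := by omega
    refine ⟨by simpa [padMatrix] using h.pivot_ne_zero hs, fun a b => ?_, ?_⟩
    · refine Fin.cases ?_ (fun a => ?_) a <;> refine Fin.cases ?_ (fun b => ?_) b <;>
        simp [padMatrix, h.abs_le_abs_pivot hs]
    · ext a b
      refine Fin.cases ?_ (fun a => ?_) a <;> refine Fin.cases ?_ (fun b => ?_) b <;>
        simp [padMatrix, h.succ_apply hs, mul_assoc]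

lemma exists_padded_run (h : CrossApproxSeq A m R i j) (hA : 0 < maxNorm A) (p : ℕ) :
    ∃ (n' : ℕ) (B' : Matrix (Fin n') (Fin n') ℝ) (R' : ℕ → Matrix (Fin n') (Fin n') ℝ)
      (i' j' : ℕ → Fin n'), CrossApproxSeq B' (m + p) R' i' j' ∧
        maxNorm B' = maxNorm A ∧ maxNorm (R' (m + p)) = maxNorm (R m) := by
  induction p with
  | zero => exact ⟨n, A, R, i, j, h, rfl, rfl⟩
  | succ p ih =>
    obtain ⟨n', B', R', i', j', h', hB', hR'⟩ := ih
    refine ⟨n' + 1, _, _, _, _, h'.pad hA hB'.le, ?_, ?_⟩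
    · rw [maxNorm_padMatrix, hB', abs_of_pos hA, max_self]
    · rw [← hR']
      exact (maxNorm_padMatrix 0 _).trans (by simp [maxNorm_nonneg])

lemma maxNorm_le_growthFactor_mul (h : CrossApproxSeq A m R i j) {t : ℕ} (ht : t ≤ m) :
    maxNorm (R m) ≤ growthFactor m * maxNorm (R t) := by
  have hs := h.shift t
  rcases (maxNorm_nonneg (R t)).eq_or_lt with h0 | hpos
  · have := hs.maxNorm_le_two_pow_mul le_rfl
    simp only [Nat.add_sub_cancel' ht, ← h0, mul_zero] at this
    rw [← h0, mul_zero]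
    exact this
  · obtain ⟨n', B, R', i', j', h', hB, hR'⟩ := hs.exists_padded_run hpos t
    rw [Nat.sub_add_cancel ht] at h' hR'
    rw [Nat.add_sub_cancel' ht] at hR'
    rw [← hR', ← hB, ← div_le_iff₀ (hB ▸ hpos)]
    exact h'.div_le_growthFactor

lemma sum_succ_apply_mul (h : CrossApproxSeq A m R i j) {k : ℕ} (hk : k < m) (x : ℕ → ℝ)
    (T : Finset ℕ) (a : Fin n) :
    ∑ t ∈ T, R (k + 1) a (j t) * x t = ∑ t ∈ T, R k a (j t) * x t -
      (R k (i k) (j k))⁻¹ * R k a (j k) * ∑ t ∈ T, R k (i k) (j t) * x t := by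
  simp only [h.succ_apply hk, sub_mul, sum_sub_distrib, mul_sum, mul_assoc]

lemma abs_sum_apply_mul_le (h : CrossApproxSeq A m R i j) (x : ℕ → ℝ) (T : Finset ℕ) {Y : ℝ}
    (hY : ∀ r < m, |∑ t ∈ T, A (i r) (j t) * x t| ≤ Y) {k : ℕ} (hk : k ≤ m) {r : ℕ}
    (hr : r < m) : |∑ t ∈ T, R k (i r) (j t) * x t| ≤ 2 ^ k * Y := by
  induction k generalizing r with
  | zero => simpa [h.1] using hY r hr
  | succ k ih =>
    rw [h.sum_succ_apply_mul hk]
    calc _ ≤ |∑ t ∈ T, R k (i r) (j t) * x t| +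
          |(R k (i k) (j k))⁻¹ * R k (i r) (j k)| * |∑ t ∈ T, R k (i k) (j t) * x t| := by
          rw [← abs_mul]; exact abs_sub _ _
      _ ≤ 2 ^ k * Y + 1 * (2 ^ k * Y) := by
          gcongr
          · exact ih (by omega) hr
          · exact h.abs_inv_pivot_mul_le_one hk _
          · exact ih (by omega) hk
      _ = 2 ^ (k + 1) * Y := by ring

lemma abs_pivot_mul_abs_le (h : CrossApproxSeq A m R i j) (x : ℕ → ℝ) {k : ℕ} (hk : k < m) :
    |R k (i k) (j k)| * |x k| ≤ |∑ t ∈ range m, R k (i k) (j t) * x t| +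
      |R k (i k) (j k)| * ∑ t ∈ Ico (k + 1) m, |x t| := by
  have hsplit : ∑ t ∈ range m, R k (i k) (j t) * x t =
      R k (i k) (j k) * x k + ∑ t ∈ Ico (k + 1) m, R k (i k) (j t) * x t := by
    rw [← sum_range_add_sum_Ico _ hk.le, sum_eq_sum_Ico_succ_bot hk,
      sum_eq_zero fun t ht => by rw [h.apply_col_eq_zero (mem_range.1 ht) hk.le, zero_mul],
      zero_add]
  have htail : |∑ t ∈ Ico (k + 1) m, R k (i k) (j t) * x t| ≤
      |R k (i k) (j k)| * ∑ t ∈ Ico (k + 1) m, |x t| := by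
    rw [mul_sum]
    refine (abs_sum_le_sum_abs _ _).trans (sum_le_sum fun t _ => ?_)
    rw [abs_mul]
    exact mul_le_mul_of_nonneg_right (h.abs_le_abs_pivot hk _ _) (abs_nonneg _)
  calc |R k (i k) (j k)| * |x k|
      = |∑ t ∈ range m, R k (i k) (j t) * x t - ∑ t ∈ Ico (k + 1) m, R k (i k) (j t) * x t| := by
        rw [hsplit, add_sub_cancel_right, abs_mul]
    _ ≤ _ := (abs_sub _ _).trans (by gcongr)

lemma le_two_pow_mul_maxNorm (h : CrossApproxSeq A (m + 1) R i j)
    {E : Matrix (Fin n) (Fin n) ℝ} (hE : (A + E).rank ≤ m) {δ : ℝ}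
    (hδ : ∀ k ≤ m, δ ≤ |R k (i k) (j k)|) : δ ≤ 2 ^ (2 * m + 1) * maxNorm E := by
  have hc := maxNorm_nonneg E
  rcases le_or_gt δ 0 with hδ0 | hδ0
  · exact hδ0.trans (by positivity)
  obtain ⟨x, hX, hx⟩ := exists_sum_mul_eq_zero_of_rank_le (A + E) hE i j
  set X := ∑ t ∈ range (m + 1), |x t|
  set c := maxNorm E
  have hy : ∀ r < m + 1, |∑ t ∈ range (m + 1), A (i r) (j t) * x t| ≤ c * X :=
    fun r hr => abs_sum_mul_le_maxNorm_mul_of_sum_add_mul_eq_zero (hx r hr)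
  have hz : ∀ k < m + 1, |∑ t ∈ range (m + 1), R k (i k) (j t) * x t| ≤ 2 ^ m * (c * X) :=
    fun k hk => (h.abs_sum_apply_mul_le x _ hy hk.le hk).trans
      (mul_le_mul_of_nonneg_right (pow_le_pow_right₀ (by norm_num) (by omega))
        (mul_nonneg hc hX.le))
  have hback : ∀ k < m + 1, |x k| ≤ 2 ^ m * (c * X) / δ + ∑ t ∈ Ico (k + 1) (m + 1), |x t| := by
    intro k hk
    have hp := hδ k (by omega)
    have hp0 := hδ0.trans_le hp
    calc |x k| = |R k (i k) (j k)| * |x k| / |R k (i k) (j k)| := by field_simp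
      _ ≤ (|∑ t ∈ range (m + 1), R k (i k) (j t) * x t| +
          |R k (i k) (j k)| * ∑ t ∈ Ico (k + 1) (m + 1), |x t|) / |R k (i k) (j k)| := by
          gcongr; exact h.abs_pivot_mul_abs_le x hk
      _ = |∑ t ∈ range (m + 1), R k (i k) (j t) * x t| / |R k (i k) (j k)| +
          ∑ t ∈ Ico (k + 1) (m + 1), |x t| := by field_simp
      _ ≤ _ := by gcongr; exact hz k hk
  have hX_le := sum_Ico_le_sum_Ico_two_pow_mul hback (Nat.zero_le _)
  simp only [← range_eq_Ico, Nat.sub_zero, ← sum_mul] at hX_le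
  rw [geom_sum_eq (by norm_num), mul_div_assoc', le_div_iff₀ hδ0] at hX_le
  refine le_of_mul_le_mul_left ?_ hX
  calc X * δ ≤ (2 ^ (m + 1) - 1) / (2 - 1) * (2 ^ m * (c * X)) := hX_le
    _ ≤ 2 ^ (m + 1) * (2 ^ m * (c * X)) := by gcongr; norm_num
    _ = X * (2 ^ (2 * m + 1) * c) := by ring

lemma le_two_pow_mul_gammaAp (h : CrossApproxSeq A (m + 1) R i j) {δ : ℝ}
    (hδ : ∀ k ≤ m, δ ≤ |R k (i k) (j k)|) : δ ≤ 2 ^ (2 * m + 1) * gammaAp A m := by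
  rw [← div_le_iff₀' (by positivity)]
  exact le_gammaAp fun E hE => (div_le_iff₀' (by positivity)).2 (h.le_two_pow_mul_maxNorm hE hδ)

end CrossApproxSeq

theorem crossApprox_error_bound_maxNorm_general {n m : ℕ}
    (A : Matrix (Fin n) (Fin n) ℝ)
    (R : ℕ → Matrix (Fin n) (Fin n) ℝ) (i j : ℕ → Fin n)
    (halg : CrossApproxSeq A m R i j) :
    maxNorm (A -
        A.submatrix id (fun t : Fin m => j t.1) *
          (A.submatrix (fun t : Fin m => i t.1) (fun t : Fin m => j t.1))⁻¹ *
          A.submatrix (fun t : Fin m => i t.1) id) ≤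
      2 ^ (2 * m + 1) * growthFactor m * gammaAp A m := by
  rw [halg.cross_eq, sub_sub_cancel]
  rcases (maxNorm_nonneg (R m)).eq_or_lt with hzero | hpos
  · rw [← hzero]
    exact mul_nonneg (mul_nonneg (by positivity) (growthFactor_nonneg m)) (gammaAp_nonneg A m)
  obtain ⟨R', i', j', hext, hR'⟩ := halg.exists_extend hpos.ne'
  have hpiv : ∀ k ≤ m, maxNorm (R m) ≤ growthFactor m * |R' k (i' k) (j' k)| := fun k hk => by
    rw [← hR', ← hext.maxNorm_eq_abs_pivot (Nat.lt_succ_of_le hk)]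
    exact (hext.mono m.le_succ).maxNorm_le_growthFactor_mul hk
  have hρ : 0 < growthFactor m :=
    pos_of_mul_pos_left (hpos.trans_le (hpiv m le_rfl)) (abs_nonneg _)
  have hδ := hext.le_two_pow_mul_gammaAp fun k hk => (div_le_iff₀' hρ).2 (hpiv k hk)
  rw [div_le_iff₀' hρ] at hδ
  linarith

/-- Error bound for cross approximation with complete pivoting, with the best
approximation error measured in the max-norm:
`‖A − A(:,J)A(I,J)⁻¹A(I,:)‖_max ≤ 2^(2m+1) · ρ_m · γ_m(A)`. -/
theorem crossApprox_error_bound_maxNorm {n m : ℕ} (hmn : m < n)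
    (A : Matrix (Fin n) (Fin n) ℝ) (hrank : m ≤ A.rank)
    (R : ℕ → Matrix (Fin n) (Fin n) ℝ) (i j : ℕ → Fin n)
    (halg : CrossApproxSeq A m R i j) :
    maxNorm (A -
        A.submatrix id (fun t : Fin m => j t.1) *
          (A.submatrix (fun t : Fin m => i t.1) (fun t : Fin m => j t.1))⁻¹ *
          A.submatrix (fun t : Fin m => i t.1) id) ≤
      2 ^ (2 * m + 1) * growthFactor m * gammaAp A m :=
  crossApprox_error_bound_maxNorm_general A R i j halg
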